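/- arXiv:1111.4880 — 7 statements merged into one kernel-verified Lean document; each statement's English description precedes it below -/
import Mathlib

section
/- (Subdivision identity) For all natural numbers j ≤ n and all real numbers x and y, B_j^n(xy) = ∑_{k=j}^n B_j^k(x) B_k^n(y). -/
/-!
Writing `1 - x * y = (1 - x) * y + (1 - y)`, the binomial theorem expands `(1 - x y)^(n - j)`;
after the reindexing `k = j + i`, the trinomial revision `C(n,k) C(k,j) = C(n,j) C(n-j,k-j)`
identifies each term with `B_j^k(x) B_k^n(y)`.
-/

/-- Bernstein basis function `B_k^n(x) = C(n,k) x^k (1-x)^(n-k)`;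
by convention it is `0` when `k > n` since then `C(n,k) = 0`. -/
def bern (n k : ℕ) (x : ℝ) : ℝ := (n.choose k : ℝ) * x ^ k * (1 - x) ^ (n - k)

lemma bern_eq_zero_of_lt {n k : ℕ} (h : n < k) (x : ℝ) : bern n k x = 0 := by
  simp [bern, Nat.choose_eq_zero_of_lt h]

lemma bern_add_mul_bern (n j i : ℕ) (x y : ℝ) :
    bern (j + i) j x * bern n (j + i) y =
      n.choose j * (x * y) ^ j *
        (((1 - x) * y) ^ i * (1 - y) ^ (n - j - i) * (n - j).choose i) := by
  have hchoose : (n.choose (j + i) : ℝ) * (j + i).choose j = n.choose j * (n - j).choose i := by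
    exact_mod_cast by simpa using Nat.choose_mul (n := n) (Nat.le_add_right j i)
  rw [bern, bern, Nat.add_sub_cancel_left, Nat.sub_sub, mul_pow, mul_pow, pow_add]
  linear_combination (x ^ j * (1 - x) ^ i * y ^ j * y ^ i * (1 - y) ^ (n - (j + i))) * hchoose

theorem bern_subdivision_general (n j : ℕ) (x y : ℝ) :
    bern n j (x * y) = ∑ k ∈ Finset.Icc j n, bern k j x * bern n k y := by
  rcases lt_or_ge n j with hnj | hjn
  · rw [bern_eq_zero_of_lt hnj, Finset.Icc_eq_empty_of_lt hnj, Finset.sum_empty]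
  rw [← Finset.Ico_add_one_right_eq_Icc, Finset.sum_Ico_eq_sum_range, Nat.sub_add_comm hjn,
    Finset.sum_congr rfl fun i _ => bern_add_mul_bern n j i x y,
    ← Finset.mul_sum, ← add_pow, bern, show (1 - x) * y + (1 - y) = 1 - x * y by ring]

theorem bern_subdivision (n j : ℕ) (hj : j ≤ n) (x y : ℝ) :
    bern n j (x * y) = ∑ k ∈ Finset.Icc j n, bern k j x * bern n k y :=
  bern_subdivision_general n j x y
end

section
/- (Monomials in terms of the Bernstein basis) For all natural numbers l ≤ n and every real number x, C(n,l) x^l = ∑_{k=l}^n C(k,l) B_k^n(x). -/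
open Finset

/-- The binomial theorem for `(x + y) ^ (n - l)`, reindexed by `k = l + j`, combined with
`C(n,l) C(n-l,j) = C(n,k) C(k,l)`. -/
theorem choose_mul_pow_mul_add_pow {R : Type*} [CommSemiring R] (x y : R) (n l : ℕ) :
    (n.choose l : R) * x ^ l * (x + y) ^ (n - l) =
      ∑ k ∈ Icc l n, (k.choose l : R) * ((n.choose k : R) * x ^ k * y ^ (n - k)) := by
  rcases lt_or_ge n l with hnl | hln
  · simp [Nat.choose_eq_zero_of_lt hnl, Icc_eq_empty_of_lt hnl]
  rw [add_pow, mul_sum, ← Ico_add_one_right_eq_Icc, sum_Ico_eq_sum_range,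
    show n + 1 - l = n - l + 1 by omega]
  refine sum_congr rfl fun j _ => ?_
  have hchoose : (n.choose (l + j) : R) * ((l + j).choose l : R) =
      n.choose l * (n - l).choose j := by
    rw [← Nat.cast_mul, ← Nat.cast_mul, Nat.choose_mul (Nat.le_add_right l j),
      Nat.add_sub_cancel_left]
  rw [← Nat.sub_sub, pow_add]
  calc _ = (n.choose l * (n - l).choose j : R) * (x ^ l * x ^ j * y ^ (n - l - j)) := by ring
    _ = _ := by rw [← hchoose]; ring

theorem monomial_eq_sum_bern_general (n l : ℕ) (x : ℝ) :
    (n.choose l : ℝ) * x ^ l = ∑ k ∈ Finset.Icc l n, (k.choose l : ℝ) * bern n k x := by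
  simpa [bern] using choose_mul_pow_mul_add_pow x (1 - x) n l

theorem monomial_eq_sum_bern (n l : ℕ) (hl : l ≤ n) (x : ℝ) :
    (n.choose l : ℝ) * x ^ l = ∑ k ∈ Finset.Icc l n, (k.choose l : ℝ) * bern n k x :=
  monomial_eq_sum_bern_general n l x
end

section
/- For all natural numbers k and l and all real numbers t, the l-th derivative with respect to x of the generating function f_{B,k}(x,t) = t^k x^k e^{(1-x)t}/k! satisfies, for every real x, ∂^l f_{B,k}(x,t)/∂x^l = ∑_{j=0}^l C(l,j) (-1)^{l-j} t^l f_{B,k-j}(x,t), where the terms with j > k are taken to be 0. -/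
/-- Generating function for the Bernstein basis functions:
`f_{B,k}(x,t) = t^k x^k e^((1-x)t) / k!`. -/
noncomputable def bernGen (k : ℕ) (x t : ℝ) : ℝ :=
  t ^ k * x ^ k * Real.exp ((1 - x) * t) / (Nat.factorial k : ℝ)

/-!
Write `f_{B,k}(x,t) = t^k e^t · (x^k / k!) · e^(-t x)` and apply the Leibniz rule in `x`: the
`j`-th derivative of `x^k / k!` is `x^(k-j) / (k-j)!` (zero for `j > k`), that of `e^(-t x)` is
`(-t)^j e^(-t x)`, and regrouping the powers of `t` turns each term back into
`(-1)^(l-j) t^l f_{B,k-j}(x,t)`.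
-/

open Finset Nat Real

theorem iteratedDeriv_pow_div_factorial {𝕜 : Type*} [NontriviallyNormedField 𝕜] [CharZero 𝕜]
    (k j : ℕ) (x : 𝕜) :
    iteratedDeriv j (fun y : 𝕜 => y ^ k / k !) x = if j ≤ k then x ^ (k - j) / (k - j)! else 0 := by
  rw [iteratedDeriv_div_const, iteratedDeriv_pow]
  split_ifs with hj
  · rw [← Nat.factorial_mul_descFactorial hj]
    push_cast
    have hpos : (k.descFactorial j : 𝕜) ≠ 0 := Nat.cast_ne_zero.mpr (Nat.descFactorial_pos.mpr hj).ne'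
    field_simp
  · simp [Nat.descFactorial_eq_zero_iff_lt.mpr (not_le.mp hj)]

theorem bernGen_eq_mul (k : ℕ) (x t : ℝ) :
    bernGen k x t = t ^ k * exp t * (x ^ k / k ! * exp (-t * x)) := by
  rw [bernGen, show (1 - x) * t = t + -t * x by ring, exp_add]
  ring

theorem leibniz_term_eq_bernGen {k l j : ℕ} (hjk : j ≤ k) (hjl : j ≤ l) (x t : ℝ) :
    t ^ k * exp t * (x ^ (k - j) / (k - j)! * ((-t) ^ (l - j) * exp (-t * x))) =
      (-1) ^ (l - j) * t ^ l * bernGen (k - j) x t := by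
  rw [bernGen_eq_mul, neg_pow, ← Nat.add_sub_cancel' hjk, ← Nat.add_sub_cancel' hjl]
  simp only [Nat.add_sub_cancel_left, pow_add]
  ring

theorem iteratedDeriv_bernGen_x (k l : ℕ) (t x : ℝ) :
    iteratedDeriv l (fun y : ℝ => bernGen k y t) x =
      ∑ j ∈ Finset.range (l + 1),
        (l.choose j : ℝ) * (-1 : ℝ) ^ (l - j) * t ^ l *
          (if j ≤ k then bernGen (k - j) x t else 0) := by
  calc iteratedDeriv l (fun y : ℝ => bernGen k y t) x
      = t ^ k * exp t * iteratedDeriv l (fun y => y ^ k / k ! * exp (-t * y)) x := by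
        simp_rw [bernGen_eq_mul]
        exact iteratedDeriv_const_mul_field _ _
    _ = t ^ k * exp t * ∑ j ∈ range (l + 1), (l.choose j : ℝ) *
          (if j ≤ k then x ^ (k - j) / (k - j)! else 0) * ((-t) ^ (l - j) * exp (-t * x)) := by
        rw [iteratedDeriv_fun_mul (by fun_prop) (by fun_prop)]
        simp only [iteratedDeriv_pow_div_factorial, iteratedDeriv_exp_const_mul]
    _ = _ := by
        rw [mul_sum]
        refine sum_congr rfl fun j hj => ?_
        split_ifs with hjk
        · linear_combination (l.choose j : ℝ) *
            leibniz_term_eq_bernGen hjk (Nat.lt_succ_iff.mp (mem_range.mp hj)) x t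
        · simp
end

section
/- (Higher-order derivatives of the Bernstein basis functions) For all natural numbers l ≤ n, every natural number k, and every real number x, the l-th derivative of B_k^n with respect to x satisfies d^l B_k^n(x)/dx^l = (n!/(n-l)!) ∑_{j=0}^l (-1)^{l-j} C(l,j) B_{k-j}^{n-l}(x), where terms with j > k are taken to be 0. -/
open fwdDiff Function

lemma bern_eq_eval_bernsteinPolynomial (n k : ℕ) :
    bern n k = fun x => (bernsteinPolynomial ℝ n k).eval x := by
  ext x
  simp [bern, bernsteinPolynomial]

lemma hasDerivAt_bern_succ_zero (m : ℕ) (x : ℝ) :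
    HasDerivAt (bern (m + 1) 0) (-((m + 1) * bern m 0 x)) x := by
  simp only [bern_eq_eval_bernsteinPolynomial]
  refine ((bernsteinPolynomial ℝ (m + 1) 0).hasDerivAt x).congr_deriv ?_
  simp [bernsteinPolynomial.derivative_zero]
  ring

lemma hasDerivAt_bern_succ_succ (m i : ℕ) (x : ℝ) :
    HasDerivAt (bern (m + 1) (i + 1)) ((m + 1) * (bern m i x - bern m (i + 1) x)) x := by
  simp only [bern_eq_eval_bernsteinPolynomial]
  simpa [bernsteinPolynomial.derivative_succ] using
    (bernsteinPolynomial ℝ (m + 1) (i + 1)).hasDerivAt x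

def bernShift (m k : ℕ) (x : ℝ) (j : ℕ) : ℝ := if j ≤ k then bern m (k - j) x else 0

lemma hasDerivAt_bernShift (m k j : ℕ) (x : ℝ) :
    HasDerivAt (fun y => bernShift (m + 1) k y j) ((m + 1) * Δ_[1] (bernShift m k x) j) x := by
  by_cases hjk : j ≤ k
  · obtain ⟨i, rfl⟩ := Nat.exists_eq_add_of_le hjk
    cases i with
    | zero => simpa [bernShift, fwdDiff] using hasDerivAt_bern_succ_zero m x
    | succ i =>
      simpa [bernShift, fwdDiff, show j + (i + 1) - (j + 1) = i by omega]
        using hasDerivAt_bern_succ_succ m i x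
  · simpa [bernShift, fwdDiff, hjk, show ¬j + 1 ≤ k by omega] using hasDerivAt_const x (0 : ℝ)

lemma HasDerivAt.fwdDiff_iter {𝕜 E M : Type*} [NontriviallyNormedField 𝕜]
    [NormedAddCommGroup E] [NormedSpace 𝕜 E] [AddCommMonoid M]
    {F : 𝕜 → M → E} {F' : M → E} {x : 𝕜} (h : M)
    (hF : ∀ j, HasDerivAt (fun y => F y j) (F' j) x) (l : ℕ) (j : M) :
    HasDerivAt (fun y => (Δ_[h])^[l] (F y) j) ((Δ_[h])^[l] F' j) x := by
  induction l generalizing j with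
  | zero => exact hF j
  | succ l ih =>
    simp only [iterate_succ_apply', fwdDiff]
    exact (ih (j + h)).sub (ih j)

lemma iteratedDeriv_bern_add (m l k : ℕ) :
    iteratedDeriv l (bern (m + l) k) =
      fun x => ((m + l).descFactorial l : ℝ) * (Δ_[1])^[l] (bernShift m k x) 0 := by
  induction l generalizing m with
  | zero => funext x; simp [bernShift]
  | succ l ih =>
    funext x
    have hderiv := (HasDerivAt.fwdDiff_iter 1 (fun j => hasDerivAt_bernShift m k j x) l 0).const_mul
      ((m + 1 + l).descFactorial l : ℝ)
    rw [iteratedDeriv_succ, show m + (l + 1) = m + 1 + l by omega, ih, hderiv.deriv]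
    change _ * (Δ_[1])^[l] ((m + 1 : ℝ) • Δ_[1] (bernShift m k x)) 0 = _
    rw [fwdDiff_iter_const_smul, Pi.smul_apply, smul_eq_mul, ← iterate_succ_apply,
      Nat.descFactorial_succ, Nat.add_sub_cancel]
    push_cast
    ring

theorem iteratedDeriv_bern (n k l : ℕ) (hl : l ≤ n) (x : ℝ) :
    iteratedDeriv l (fun y : ℝ => bern n k y) x =
      ((Nat.factorial n : ℝ) / (Nat.factorial (n - l) : ℝ)) *
        ∑ j ∈ Finset.range (l + 1),
          (-1 : ℝ) ^ (l - j) * (l.choose j : ℝ) *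
            (if j ≤ k then bern (n - l) (k - j) x else 0) := by
  obtain ⟨m, rfl⟩ : ∃ m, n = m + l := ⟨n - l, by omega⟩
  have hfact : ((m + l).factorial : ℝ) / (m + l - l).factorial = (m + l).descFactorial l := by
    rw [← Nat.factorial_mul_descFactorial (Nat.le_add_left l m)]
    push_cast
    field_simp
  rw [hfact, congrFun (iteratedDeriv_bern_add m l k) x, fwdDiff_iter_eq_sum_shift,
    Nat.add_sub_cancel]
  simp [bernShift]
end

section
/- For all natural numbers n, k₁, k₂ and every real number x, B_{k₁+k₂}^n(x) = (2^{k₁+k₂-n} k₁! k₂!/(k₁+k₂)!) ∑_{j=0}^n C(n,j) B_{k₁}^j(x) B_{k₂}^{n-j}(x); equivalently, ∑_{j=0}^n C(n,j) B_{k₁}^j(x) B_{k₂}^{n-j}(x) = 2^{n-k₁-k₂} ((k₁+k₂)!/(k₁! k₂!)) B_{k₁+k₂}^n(x). -/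
open Finset

namespace Nat

theorem choose_mul_choose_sub_comm (n j k : ℕ) :
    n.choose j * (n - j).choose k = n.choose k * (n - k).choose j := by
  have hj := choose_mul (n := n) (le_add_right j k)
  have hk := choose_mul (n := n) (le_add_left k j)
  rw [Nat.add_sub_cancel_left] at hj
  rw [Nat.add_sub_cancel] at hk
  rw [← hj, ← hk, choose_symm_add]

theorem sum_range_choose_mul_choose {n N : ℕ} (hN : n < N) (k : ℕ) :
    ∑ j ∈ range N, n.choose j * j.choose k = 2 ^ (n - k) * n.choose k := by
  rcases lt_or_ge n k with hnk | hkn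
  · rw [choose_eq_zero_of_lt hnk, mul_zero]
    refine Finset.sum_eq_zero fun j _ => ?_
    rcases lt_or_ge n j with hnj | hjn
    · rw [choose_eq_zero_of_lt hnj, zero_mul]
    · rw [choose_eq_zero_of_lt (hjn.trans_lt hnk), mul_zero]
  obtain ⟨m, rfl⟩ := exists_add_of_le hkn
  obtain ⟨d, rfl⟩ := exists_add_of_le (show k + m + 1 ≤ N from hN)
  have hsplit : k + m + 1 + d = k + (m + 1) + d := by ring
  have hbelow : ∀ j ∈ range k, (k + m).choose j * j.choose k = 0 := fun j hj => by
    rw [choose_eq_zero_of_lt (mem_range.1 hj), mul_zero]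
  have habove :
      ∀ i ∈ range d, (k + m).choose (k + (m + 1) + i) * (k + (m + 1) + i).choose k = 0 :=
    fun i _ => by rw [choose_eq_zero_of_lt (by omega), zero_mul]
  rw [hsplit, sum_range_add, sum_range_add, Finset.sum_eq_zero hbelow,
    Finset.sum_eq_zero habove, zero_add, add_zero]
  simp_rw [choose_mul (le_add_right k _), Nat.add_sub_cancel_left, ← mul_sum, sum_range_choose,
    mul_comm]

theorem sum_range_choose_mul_choose_mul_choose (n k₁ k₂ : ℕ) :
    ∑ j ∈ range (n + 1), n.choose j * j.choose k₁ * (n - j).choose k₂ =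
      2 ^ (n - k₁ - k₂) * (n.choose (k₁ + k₂) * (k₁ + k₂).choose k₁) := by
  have hmulti :
      n.choose (k₁ + k₂) * (k₁ + k₂).choose k₁ = n.choose k₂ * (n - k₂).choose k₁ := by
    rw [choose_symm_add, choose_mul (le_add_left k₂ k₁), Nat.add_sub_cancel]
  calc ∑ j ∈ range (n + 1), n.choose j * j.choose k₁ * (n - j).choose k₂
      = n.choose k₂ *
          ∑ j ∈ range (n + 1), (n - k₂).choose j * j.choose k₁ := by
        rw [mul_sum]
        refine sum_congr rfl fun j _ => ?_
        rw [mul_right_comm, choose_mul_choose_sub_comm, mul_assoc]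
    _ = 2 ^ (n - k₁ - k₂) * (n.choose (k₁ + k₂) * (k₁ + k₂).choose k₁) := by
        rw [sum_range_choose_mul_choose (by omega), hmulti, Nat.sub_right_comm]
        ring

end Nat

theorem bern_mul_bern (a b k₁ k₂ : ℕ) (x : ℝ) :
    bern a k₁ x * bern b k₂ x =
      ((a.choose k₁ * b.choose k₂ : ℕ) : ℝ) * x ^ (k₁ + k₂) *
        (1 - x) ^ (a + b - k₁ - k₂) := by
  unfold bern
  rcases lt_or_ge a k₁ with ha | ha
  · simp [Nat.choose_eq_zero_of_lt ha]
  rcases lt_or_ge b k₂ with hb | hb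
  · simp [Nat.choose_eq_zero_of_lt hb]
  rw [show a + b - k₁ - k₂ = (a - k₁) + (b - k₂) by omega]
  push_cast
  ring

theorem choose_mul_two_zpow_sub (n k : ℕ) :
    (n.choose k : ℝ) * (2 : ℝ) ^ ((n : ℤ) - k) = (n.choose k : ℝ) * 2 ^ (n - k) := by
  rcases le_or_gt k n with h | h
  · rw [← Nat.cast_sub h, zpow_natCast]
  · simp [Nat.choose_eq_zero_of_lt h]

theorem bern_product_sum (n k₁ k₂ : ℕ) (x : ℝ) :
    ∑ j ∈ Finset.range (n + 1), (n.choose j : ℝ) * bern j k₁ x * bern (n - j) k₂ x =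
      (2 : ℝ) ^ ((n : ℤ) - (k₁ : ℤ) - (k₂ : ℤ)) *
        ((Nat.factorial (k₁ + k₂) : ℝ) / ((Nat.factorial k₁ : ℝ) * (Nat.factorial k₂ : ℝ))) *
          bern n (k₁ + k₂) x := by
  have hterm : ∀ j ∈ range (n + 1), (n.choose j : ℝ) * bern j k₁ x * bern (n - j) k₂ x =
      ((n.choose j * j.choose k₁ * (n - j).choose k₂ : ℕ) : ℝ) *
        (x ^ (k₁ + k₂) * (1 - x) ^ (n - (k₁ + k₂))) := fun j hj => by
    rw [mul_assoc, bern_mul_bern, Nat.add_sub_cancel' (mem_range_succ_iff.1 hj),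
      Nat.sub_sub]
    push_cast
    ring
  have hzpow := choose_mul_two_zpow_sub n (k₁ + k₂)
  rw [sum_congr rfl hterm, ← sum_mul, ← Nat.cast_sum,
    Nat.sum_range_choose_mul_choose_mul_choose,
    ← Nat.cast_add_choose, bern, Nat.sub_sub]
  push_cast at hzpow ⊢
  rw [sub_sub]
  linear_combination
    (x ^ (k₁ + k₂) * (1 - x) ^ (n - (k₁ + k₂)) * ((k₁ + k₂).choose k₁ : ℝ)) * hzpow.symm
end

section
/- For all natural numbers k ≤ n and every real number x, ∑_{j=0}^{n-k} (-1)^j C(n,j) B_k^{n-j}(x) = (-1)^{n-k} C(n,k) x^n. -/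
/-!
Write `n = k + m`. Choosing first `j` and then `k` out of `k + m` is the same as choosing first
`k` and then `j` out of the remaining `m`, so `C(n,j) B_k^{n-j}(x) = C(n,k) x^k C(m,j) (1-x)^{m-j}`.
The alternating sum of the last factors is the binomial expansion of `((1-x) - 1)^m = (-x)^m`.
-/

open Finset

theorem Nat.choose_mul_choose_add_sub {k m j : ℕ} (hj : j ≤ m) :
    (k + m).choose j * (k + m - j).choose k = (k + m).choose k * m.choose j := by
  have h := Nat.choose_mul (n := k + m) (k := k + m - j) (s := k) (by omega)
  rwa [Nat.choose_symm (by omega), show k + m - j - k = m - j by omega, Nat.add_sub_cancel_left,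
    Nat.choose_symm hj] at h

theorem choose_mul_bern_add_sub {k m j : ℕ} (hj : j ≤ m) (x : ℝ) :
    ((k + m).choose j : ℝ) * bern (k + m - j) k x =
      (k + m).choose k * x ^ k * (m.choose j * (1 - x) ^ (m - j)) := by
  have h : ((k + m).choose j : ℝ) * (k + m - j).choose k = (k + m).choose k * m.choose j := by
    exact_mod_cast Nat.choose_mul_choose_add_sub hj
  rw [bern, show k + m - j - k = m - j by omega]
  linear_combination x ^ k * (1 - x) ^ (m - j) * h

theorem sub_one_pow_eq_sum_range {R : Type*} [CommRing R] (y : R) (m : ℕ) :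
    (y - 1) ^ m = ∑ j ∈ range (m + 1), (-1) ^ j * (m.choose j * y ^ (m - j)) := by
  rw [sub_eq_neg_add, add_pow]
  exact sum_congr rfl fun j _ => by ring

theorem bern_sum_identity_two (n k : ℕ) (hk : k ≤ n) (x : ℝ) :
    ∑ j ∈ Finset.range (n - k + 1), (-1 : ℝ) ^ j * (n.choose j : ℝ) * bern (n - j) k x =
      (-1 : ℝ) ^ (n - k) * (n.choose k : ℝ) * x ^ n := by
  obtain ⟨m, rfl⟩ := Nat.exists_eq_add_of_le hk
  rw [Nat.add_sub_cancel_left]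
  calc ∑ j ∈ range (m + 1), (-1 : ℝ) ^ j * ((k + m).choose j : ℝ) * bern (k + m - j) k x
      = (k + m).choose k * x ^ k *
          ∑ j ∈ range (m + 1), (-1) ^ j * (m.choose j * (1 - x) ^ (m - j)) := by
        rw [mul_sum]
        refine sum_congr rfl fun j hj => ?_
        rw [mul_assoc, choose_mul_bern_add_sub (Nat.lt_succ_iff.mp (mem_range.mp hj))]
        ring
    _ = (k + m).choose k * x ^ k * (-x) ^ m := by
        rw [← sub_one_pow_eq_sum_range, sub_sub_cancel_left]
    _ = (-1) ^ m * (k + m).choose k * x ^ (k + m) := by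
        rw [neg_pow, pow_add]
        ring
end

section
/- For all natural numbers k ≤ n and every real number x, ∑_{j=0}^{n-k} (-1)^j C(n,j) (1-x)^j B_k^{n-j}(x) equals x^k when n = k, and equals 0 when n ≠ k. -/
/-! Choosing first `j` and then `k` out of `n` objects is choosing first `k` and then `j`. Hence the
`j`-th term of the sum is `(-1)^j C(n-k, j) B_k^n(x)`, and the sum is `B_k^n(x)` times the
alternating sum of a row of Pascal's triangle, which vanishes except for row `n - k = 0`. -/

open Finset

theorem Nat.choose_mul_choose_sub_comm_s17 (n j k : ℕ) :
    n.choose j * (n - j).choose k = n.choose k * (n - k).choose j := by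
  rcases le_or_gt (j + k) n with hjk | hjk
  · have hj := Nat.choose_mul (n := n) (k := j + k) (Nat.le_add_right j k)
    have hk := Nat.choose_mul (n := n) (k := j + k) (Nat.le_add_left k j)
    rw [Nat.add_sub_cancel_left, Nat.choose_symm_add] at hj
    rw [Nat.add_sub_cancel] at hk
    rw [← hj, ← hk]
  · have lhs : n.choose j * (n - j).choose k = 0 := by
      rcases le_or_gt j n with h | h
      · simp [Nat.choose_eq_zero_of_lt (show n - j < k by omega)]
      · simp [Nat.choose_eq_zero_of_lt h]
    have rhs : n.choose k * (n - k).choose j = 0 := by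
      rcases le_or_gt k n with h | h
      · simp [Nat.choose_eq_zero_of_lt (show n - k < j by omega)]
      · simp [Nat.choose_eq_zero_of_lt h]
    rw [lhs, rhs]

theorem alternating_sum_range_choose_eq_ite (R : Type*) [Ring R] (m : ℕ) :
    ∑ j ∈ range (m + 1), (-1 : R) ^ j * (m.choose j : R) = if m = 0 then 1 else 0 := by
  have := congrArg (Int.cast : ℤ → R) (Int.alternating_sum_range_choose (n := m))
  push_cast at this
  exact this

theorem bern_self (n : ℕ) (x : ℝ) : bern n n x = x ^ n := by
  simp [bern]

theorem neg_one_pow_mul_choose_mul_bern_sub {n k j : ℕ} (hj : j ≤ n - k) (x : ℝ) :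
    (-1 : ℝ) ^ j * (n.choose j : ℝ) * (1 - x) ^ j * bern (n - j) k x =
      bern n k x * ((-1 : ℝ) ^ j * ((n - k).choose j : ℝ)) := by
  have hchoose : (n.choose j : ℝ) * ((n - j).choose k : ℝ) = n.choose k * ((n - k).choose j : ℝ) := by
    exact_mod_cast Nat.choose_mul_choose_sub_comm_s17 n j k
  have hpow : (1 - x) ^ j * (1 - x) ^ (n - j - k) = (1 - x) ^ (n - k) := by
    rw [← pow_add]
    congr 1
    omega
  unfold bern
  linear_combination (-1 : ℝ) ^ j * x ^ k *
    ((n.choose j : ℝ) * ((n - j).choose k : ℝ) * hpow + (1 - x) ^ (n - k) * hchoose)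

theorem bern_sum_identity_three (n k : ℕ) (hk : k ≤ n) (x : ℝ) :
    ∑ j ∈ Finset.range (n - k + 1),
        (-1 : ℝ) ^ j * (n.choose j : ℝ) * (1 - x) ^ j * bern (n - j) k x =
      if n = k then x ^ k else 0 := by
  rw [sum_congr rfl fun j hj =>
      neg_one_pow_mul_choose_mul_bern_sub (Nat.lt_succ_iff.mp (mem_range.mp hj)) x,
    ← mul_sum, alternating_sum_range_choose_eq_ite]
  by_cases h : n = k
  · subst h
    simp [bern_self]
  · simp [h, show n - k ≠ 0 by omega]
end
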